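/- Let n ≥ 4 be even, A = diag(a_1,...,a_n) with a_i > 0, and x, y ∈ ℝ^n with Ax ≠ Ay. Then for every t with |t| < 1, (ω_{n−2}/ω_{n−1}) ∫_{−1}^{1} (1−s²)^{(n−3)/2} Φ^{(n−2)}( 2|Ax − Ay| (t − s) ) ds = (−1)^{(n−2)/2} (π ω_{n−2} (n−2)!/2^{n−2}) G_n(Ax, Ay), where Φ(s) = log|s| (so Φ^{(n−2)} is its (n−2)-fold distributional derivative) and G_n(u,v) = |u−v|^{2−n}/(ω_{n−1}(2−n)). -/

import Mathlib

open MeasureTheory Filter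

/-- Multiplication by the diagonal matrix `A = diag (a 1, …, a n)`. -/
def diagMul {n : ℕ} (a : Fin n → ℝ) (x : EuclideanSpace ℝ (Fin n)) :
    EuclideanSpace ℝ (Fin n) := WithLp.toLp 2 (fun i => a i * x i)

/-- `ω_k`, the total surface measure of the unit sphere `S^k ⊆ ℝ^{k+1}`. -/
noncomputable def sphereVol (k : ℕ) : ℝ :=
  ((volume : Measure (EuclideanSpace ℝ (Fin (k + 1)))).toSphere Set.univ).toReal

/-- The fundamental solution of the Laplacian in `ℝ^n` for `n > 2`. -/
noncomputable def fundSol (n : ℕ) (u v : EuclideanSpace ℝ (Fin n)) : ℝ :=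
  ‖u - v‖ ^ ((2 : ℤ) - n) / (sphereVol (n - 1) * ((2 : ℝ) - n))

/-- The Hilbert transform as a principal-value limit. -/
noncomputable def hilbert (g : ℝ → ℝ) (t : ℝ) : ℝ :=
  limUnder (nhdsWithin 0 (Set.Ioi 0))
    (fun ε : ℝ => (1 / Real.pi) * ∫ s in {s : ℝ | ε < |t - s|}, g s / (t - s))

/-!
For `n = 2m + 4` the function `(1 - s²)_+ ^ ((n - 3) / 2)` is the Gegenbauer weight
`w_j(s) = (1 - s²)_+ ^ (j - 1/2)` with `j = m + 1`. Subtracting the singularity,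
`π H[w_j](τ) = w_j(τ) log ((1 + τ) / (1 - τ)) - ∫ slope w_j τ`. Since `w_{j+1} = (1 - s²) w_j` and
the odd moments of `w_j` vanish, `π H[w_{j+1}] = (1 - τ²) π H[w_j] + τ ∫ w_j`, while `π H[w_0] = 0`
by an explicit primitive. So on `(-1, 1)` the function `π H[w_{m+1}]` is a polynomial of degree
`2m + 1` with leading coefficient `(-1)^m ∫ w_0 = (-1)^m π`; its `(n - 3)`-rd derivative is the
constant `(-1)^m (n - 3)!`, and what remains is arithmetic.
-/

open Set Real intervalIntegral
open scoped Topology Interval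

section CauchyPrincipalValue

variable {g : ℝ → ℝ} {a b c d τ : ℝ}

theorem integral_inv_sub (h : τ ∉ [[c, d]]) :
    ∫ s in c..d, (τ - s)⁻¹ = log ((τ - c) / (τ - d)) := by
  rw [intervalIntegral.integral_comp_sub_left (fun x => x⁻¹), integral_inv]
  contrapose! h
  rw [mem_uIcc] at h ⊢
  rcases h with ⟨h₁, h₂⟩ | ⟨h₁, h₂⟩
  exacts [Or.inl ⟨by linarith, by linarith⟩, Or.inr ⟨by linarith, by linarith⟩]

theorem continuousOn_inv_sub (h : τ ∉ [[c, d]]) :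
    ContinuousOn (fun s => (τ - s)⁻¹) [[c, d]] :=
  (continuousOn_const.sub continuousOn_id).inv₀ fun s hs e =>
    h (by rwa [show τ = s from sub_eq_zero.1 e])

theorem IntervalIntegrable.of_slope (h : IntervalIntegrable (slope g τ) volume c d) :
    IntervalIntegrable g volume c d := by
  have hg : g = fun s => (s - τ) * slope g τ s + g τ := by
    funext s
    simpa [smul_eq_mul, vadd_eq_add] using (sub_smul_slope_vadd g τ s).symm
  rw [hg]
  exact (h.continuousOn_mul (by fun_prop)).add intervalIntegrable_const

theorem integral_div_sub (h : τ ∉ [[c, d]]) (hg : IntervalIntegrable g volume c d) :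
    ∫ s in c..d, g s / (τ - s) = g τ * log ((τ - c) / (τ - d)) - ∫ s in c..d, slope g τ s := by
  have hinv := continuousOn_inv_sub h
  have hslope : ∀ s, slope g τ s = -(τ - s)⁻¹ * (g s - g τ) := by
    intro s; rw [slope_def_field, ← neg_sub τ s, div_eq_mul_inv, inv_neg]; ring
  have hdecomp : ∀ s ∈ [[c, d]], g s / (τ - s) = g τ * (τ - s)⁻¹ - slope g τ s := by
    intro s _; rw [hslope s]; ring
  rw [integral_congr hdecomp, intervalIntegral.integral_sub, intervalIntegral.integral_const_mul,
    integral_inv_sub h]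
  · exact hinv.intervalIntegrable.const_mul _
  · rw [funext hslope]
    exact (hg.sub intervalIntegrable_const).continuousOn_mul hinv.neg

theorem ae_restrict_uIoc_mem_Ioo_ne (hab : a ≤ b) (τ : ℝ) :
    ∀ᵐ s ∂volume.restrict (Ι a b), s ∈ Ioo a b ∧ s ≠ τ := by
  filter_upwards [ae_restrict_mem measurableSet_uIoc, ae_restrict_of_ae (Measure.ae_ne volume τ),
    ae_restrict_of_ae (Measure.ae_ne volume b)] with s hs hτ hb
  rw [uIoc_of_le hab] at hs
  exact ⟨⟨hs.1, hs.2.lt_of_ne hb⟩, hτ⟩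

theorem IntervalIntegrable.div_sub (h : τ ∉ [[c, d]]) (hg : IntervalIntegrable g volume c d) :
    IntervalIntegrable (fun s => g s / (τ - s)) volume c d := by
  simpa only [div_eq_mul_inv] using hg.mul_continuousOn (continuousOn_inv_sub h)

theorem setIntegral_lt_abs_sub {f : ℝ → ℝ} {ε : ℝ} (hf : ∀ s ∉ Ioo a b, f s = 0) (hε : 0 ≤ ε)
    (ha : a ≤ τ - ε) (hb : τ + ε ≤ b) (h₁ : IntervalIntegrable f volume a (τ - ε))
    (h₂ : IntervalIntegrable f volume (τ + ε) b) :
    ∫ s in {s | ε < |τ - s|}, f s = (∫ s in a..τ - ε, f s) + ∫ s in τ + ε..b, f s := by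
  have hset : {s | ε < |τ - s|} = Iio (τ - ε) ∪ Ioi (τ + ε) := by
    ext s; simp only [mem_ofPred_eq, lt_abs, mem_union, mem_Iio, mem_Ioi]; constructor <;>
      rintro (h | h) <;> [left; right; left; right] <;> linarith
  have hl : ∀ s ∈ Iio (τ - ε) \ Ioo a (τ - ε), f s = 0 := fun s hs =>
    hf s fun h => hs.2 ⟨h.1, hs.1⟩
  have hr : ∀ s ∈ Ioi (τ + ε) \ Ioo (τ + ε) b, f s = 0 := fun s hs =>
    hf s fun h => hs.2 ⟨hs.1, h.2⟩
  rw [intervalIntegrable_iff_integrableOn_Ioo_of_le ha] at h₁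
  rw [intervalIntegrable_iff_integrableOn_Ioo_of_le hb] at h₂
  rw [hset, setIntegral_union ((Iic_disjoint_Ioi (by linarith)).mono_left Iio_subset_Iic_self)
      measurableSet_Ioi (h₁.of_forall_sdiff_eq_zero measurableSet_Iio hl)
      (h₂.of_forall_sdiff_eq_zero measurableSet_Ioi hr),
    setIntegral_eq_of_subset_of_forall_sdiff_eq_zero measurableSet_Iio Ioo_subset_Iio_self hl,
    setIntegral_eq_of_subset_of_forall_sdiff_eq_zero measurableSet_Ioi Ioo_subset_Ioi_self hr,
    integral_of_le ha, integral_of_le hb, integral_Ioc_eq_integral_Ioo,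
    integral_Ioc_eq_integral_Ioo]

theorem tendsto_integral_add_integral_punctured {φ : ℝ → ℝ} (hτ : τ ∈ Ioo a b)
    (hφ : IntervalIntegrable φ volume a b) :
    Tendsto (fun ε => (∫ s in a..τ - ε, φ s) + ∫ s in τ + ε..b, φ s) (𝓝[>] 0)
      (𝓝 (∫ s in a..b, φ s)) := by
  set G := fun u => ∫ s in a..u, φ s
  have hG : ContinuousAt G τ :=
    (continuousOn_primitive_interval' hφ left_mem_uIcc).continuousAt
      (uIcc_of_le (hτ.1.trans hτ.2).le ▸ Icc_mem_nhds hτ.1 hτ.2)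
  have hlim : ∀ σ : ℝ, Tendsto (fun ε => G (τ + σ * ε)) (𝓝[>] 0) (𝓝 (G τ)) := fun σ =>
    tendsto_nhdsWithin_of_tendsto_nhds <| hG.tendsto.comp <|
      (continuous_const.add (continuous_const.mul continuous_id)).tendsto' 0 τ (by simp)
  have hsplit : ∀ᶠ ε in 𝓝[>] 0, G (τ + -1 * ε) + (G b - G (τ + 1 * ε))
      = (∫ s in a..τ - ε, φ s) + ∫ s in τ + ε..b, φ s := by
    filter_upwards [Ioo_mem_nhdsGT (sub_pos.2 hτ.2)] with ε hε
    have hsub : IntervalIntegrable φ volume a (τ + ε) :=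
      hφ.mono_set <| uIcc_subset_uIcc_left <| mem_uIcc_of_le (by linarith [hε.1, hτ.1])
        (by linarith [hε.2])
    simp only [G, neg_one_mul, one_mul, ← sub_eq_add_neg, ← integral_interval_sub_left hφ hsub]
  exact ((hlim (-1)).add (tendsto_const_nhds.sub (hlim 1))).congr' hsplit |>.trans (by simp [G])

/-- The principal value of `∫ s in a..b, g s / (τ - s)`, written with its singularity subtracted. -/
noncomputable def cauchyPV (a b : ℝ) (g : ℝ → ℝ) (τ : ℝ) : ℝ :=
  g τ * log ((τ - a) / (b - τ)) - ∫ s in a..b, slope g τ s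

theorem tendsto_setIntegral_div_sub_cauchyPV (hg : ∀ s ∉ Ioo a b, g s = 0) (hτ : τ ∈ Ioo a b)
    (hφ : IntervalIntegrable (slope g τ) volume a b) :
    Tendsto (fun ε => ∫ s in {s | ε < |τ - s|}, g s / (τ - s)) (𝓝[>] 0)
      (𝓝 (cauchyPV a b g τ)) := by
  have hgi := hφ.of_slope
  refine ((tendsto_integral_add_integral_punctured hτ hφ).const_sub
    (g τ * log ((τ - a) / (b - τ)))).congr' ?_
  filter_upwards [Ioo_mem_nhdsGT (lt_min (sub_pos.2 hτ.1) (sub_pos.2 hτ.2))] with ε ⟨hε, hεδ⟩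
  have ha : a ≤ τ - ε := by linarith [min_le_left (τ - a) (b - τ)]
  have hb : τ + ε ≤ b := by linarith [min_le_right (τ - a) (b - τ)]
  have hl : τ ∉ [[a, τ - ε]] := by rw [uIcc_of_le ha]; exact fun h => by linarith [h.2]
  have hr : τ ∉ [[τ + ε, b]] := by rw [uIcc_of_le hb]; exact fun h => by linarith [h.1]
  have hgl := hgi.mono_set (uIcc_subset_uIcc_left (mem_uIcc_of_le ha (by linarith [hτ.2])))
  have hgr := hgi.mono_set (uIcc_subset_uIcc_right (mem_uIcc_of_le (by linarith [hτ.1]) hb))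
  have hlog : log ((τ - a) / (τ - (τ - ε))) + log ((τ - (τ + ε)) / (τ - b))
      = log ((τ - a) / (b - τ)) := by
    have hτa : τ - a ≠ 0 := by linarith [hτ.1]
    have hbτ : b - τ ≠ 0 := by linarith [hτ.2]
    rw [sub_sub_cancel, sub_add_cancel_left, ← neg_sub b τ,
      ← log_mul (div_ne_zero hτa hε.ne') (div_ne_zero (neg_ne_zero.2 hε.ne') (neg_ne_zero.2 hbτ))]
    congr 1
    field_simp
  symm
  rw [setIntegral_lt_abs_sub (fun s hs => by rw [hg s hs, zero_div]) hε.le ha hb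
      (hgl.div_sub hl) (hgr.div_sub hr), integral_div_sub hl hgl,
    integral_div_sub hr hgr, ← hlog]
  ring

theorem hilbert_eq_cauchyPV (hg : ∀ s ∉ Ioo a b, g s = 0) (hτ : τ ∈ Ioo a b)
    (hφ : IntervalIntegrable (slope g τ) volume a b) :
    hilbert g τ = cauchyPV a b g τ / π := by
  rw [← one_div_mul_eq_div]
  exact ((tendsto_setIntegral_div_sub_cauchyPV hg hτ hφ).const_mul _).limUnder_eq

end CauchyPrincipalValue

section GegenbauerWeight

/-- Vanishes off `(-1, 1)`, also at `s = ±1`, because `0 ^ x = 0` for `x ≠ 0`. -/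
noncomputable def gegenbauerWeight (j : ℕ) (s : ℝ) : ℝ := max 0 (1 - s ^ 2) ^ ((j : ℝ) - 1 / 2)

variable {j : ℕ} {s τ : ℝ}

theorem one_sub_sq_pos_of_mem_Ioo (hs : s ∈ Ioo (-1 : ℝ) 1) : 0 < 1 - s ^ 2 := by
  nlinarith [hs.1, hs.2]

theorem gegenbauerWeight_of_mem (hs : s ∈ Ioo (-1 : ℝ) 1) :
    gegenbauerWeight j s = (1 - s ^ 2) ^ ((j : ℝ) - 1 / 2) := by
  rw [gegenbauerWeight, max_eq_right (one_sub_sq_pos_of_mem_Ioo hs).le]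

theorem gegenbauerWeight_of_notMem (hs : s ∉ Ioo (-1 : ℝ) 1) : gegenbauerWeight j s = 0 := by
  have h₀ : max 0 (1 - s ^ 2) = 0 := by
    refine max_eq_left ?_
    rw [mem_Ioo, not_and_or, not_lt, not_lt] at hs
    rcases hs with h | h <;> nlinarith
  have hexp : (j : ℝ) - 1 / 2 ≠ 0 := by
    intro h
    have : ((2 * j : ℕ) : ℝ) = 1 := by push_cast; linarith
    exact absurd (by exact_mod_cast this) (by omega : 2 * j ≠ 1)
  rw [gegenbauerWeight, h₀, zero_rpow hexp]

theorem gegenbauerWeight_succ (j : ℕ) (s : ℝ) :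
    gegenbauerWeight (j + 1) s = (1 - s ^ 2) * gegenbauerWeight j s := by
  by_cases hs : s ∈ Ioo (-1 : ℝ) 1
  · rw [gegenbauerWeight_of_mem hs, gegenbauerWeight_of_mem hs, Nat.cast_succ,
      show (j : ℝ) + 1 - 1 / 2 = (j - 1 / 2) + 1 by ring,
      rpow_add_one (one_sub_sq_pos_of_mem_Ioo hs).ne', mul_comm]
  · rw [gegenbauerWeight_of_notMem hs, gegenbauerWeight_of_notMem hs, mul_zero]

theorem gegenbauerWeight_zero_of_mem (hs : s ∈ Ioo (-1 : ℝ) 1) :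
    gegenbauerWeight 0 s = (√(1 - s ^ 2))⁻¹ := by
  rw [gegenbauerWeight_of_mem hs, sqrt_eq_rpow, ← rpow_neg (one_sub_sq_pos_of_mem_Ioo hs).le]
  norm_num

theorem gegenbauerWeight_neg (j : ℕ) (s : ℝ) : gegenbauerWeight j (-s) = gegenbauerWeight j s := by
  rw [gegenbauerWeight, gegenbauerWeight, neg_sq]

theorem hasDerivAt_arcsin_gegenbauerWeight_zero (hs : s ∈ Ioo (-1 : ℝ) 1) :
    HasDerivAt arcsin (gegenbauerWeight 0 s) s := by
  rw [gegenbauerWeight_zero_of_mem hs, inv_eq_one_div]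
  exact hasDerivAt_arcsin (by linarith [hs.1]) (by linarith [hs.2])

theorem intervalIntegrable_gegenbauerWeight (j : ℕ) :
    IntervalIntegrable (gegenbauerWeight j) volume (-1) 1 := by
  induction j with
  | zero =>
    refine intervalIntegrable_deriv_of_nonneg continuous_arcsin.continuousOn
      (fun s hs => hasDerivAt_arcsin_gegenbauerWeight_zero ?_) fun s _ => ?_
    · simpa using hs
    · exact rpow_nonneg (le_max_left _ _) _
  | succ j ih =>
    rw [funext (gegenbauerWeight_succ j)]
    exact ih.continuousOn_mul (by fun_prop)

theorem integral_gegenbauerWeight_zero : ∫ s in (-1 : ℝ)..1, gegenbauerWeight 0 s = π := by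
  rw [integral_eq_sub_of_hasDerivAt_of_le (by norm_num) continuous_arcsin.continuousOn
    (fun s hs => hasDerivAt_arcsin_gegenbauerWeight_zero hs)
    (intervalIntegrable_gegenbauerWeight 0), arcsin_one, arcsin_neg_one]
  ring

theorem integral_mul_gegenbauerWeight (j : ℕ) :
    ∫ s in (-1 : ℝ)..1, s * gegenbauerWeight j s = 0 := by
  have h := intervalIntegral.integral_comp_neg (a := -1) (b := 1)
    fun s => s * gegenbauerWeight j s
  simp only [gegenbauerWeight_neg, neg_mul, intervalIntegral.integral_neg, neg_neg] at h
  linarith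

theorem slope_gegenbauerWeight_succ (hne : s ≠ τ) :
    slope (gegenbauerWeight (j + 1)) τ s
      = (1 - τ ^ 2) * slope (gegenbauerWeight j) τ s - (τ + s) * gegenbauerWeight j s := by
  have : s - τ ≠ 0 := sub_ne_zero.2 hne
  rw [slope_def_field, slope_def_field, gegenbauerWeight_succ, gegenbauerWeight_succ]
  field_simp
  ring

theorem slope_gegenbauerWeight_zero (hτ : τ ∈ Ioo (-1 : ℝ) 1) (hs : s ∈ Ioo (-1 : ℝ) 1)
    (hne : s ≠ τ) :
    slope (gegenbauerWeight 0) τ s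
      = (s + τ) / (√(1 - τ ^ 2) * √(1 - s ^ 2) * (√(1 - τ ^ 2) + √(1 - s ^ 2))) := by
  have hc := sqrt_pos.2 (one_sub_sq_pos_of_mem_Ioo hτ)
  have hd := sqrt_pos.2 (one_sub_sq_pos_of_mem_Ioo hs)
  have hc2 := sq_sqrt (one_sub_sq_pos_of_mem_Ioo hτ).le
  have hd2 := sq_sqrt (one_sub_sq_pos_of_mem_Ioo hs).le
  have : s - τ ≠ 0 := sub_ne_zero.2 hne
  rw [slope_def_field, gegenbauerWeight_zero_of_mem hs, gegenbauerWeight_zero_of_mem hτ,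
    div_eq_div_iff this (by positivity)]
  field_simp
  linear_combination hc2 - hd2

theorem one_sub_mul_add_sqrt_mul_sqrt_pos (hτ : τ ∈ Ioo (-1 : ℝ) 1) (hs : s ∈ Icc (-1 : ℝ) 1) :
    0 < 1 - τ * s + √(1 - τ ^ 2) * √(1 - s ^ 2) := by
  have : τ * s < 1 := by
    nlinarith [mul_nonneg (sub_nonneg.2 hs.2) (neg_le_iff_add_nonneg.1 hs.1), hτ.1, hτ.2,
      mul_pos (sub_pos.2 hτ.2) (neg_lt_iff_pos_add.1 hτ.1), sq_nonneg (τ - s), sq_nonneg (τ + s)]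
  positivity

theorem hasDerivAt_log_slope_gegenbauerWeight_zero (hτ : τ ∈ Ioo (-1 : ℝ) 1)
    (hs : s ∈ Ioo (-1 : ℝ) 1) (hne : s ≠ τ) :
    HasDerivAt (fun s => -(√(1 - τ ^ 2))⁻¹ * log (1 - τ * s + √(1 - τ ^ 2) * √(1 - s ^ 2)))
      (slope (gegenbauerWeight 0) τ s) s := by
  have hc : 0 < √(1 - τ ^ 2) := sqrt_pos.2 (one_sub_sq_pos_of_mem_Ioo hτ)
  have hd : 0 < √(1 - s ^ 2) := sqrt_pos.2 (one_sub_sq_pos_of_mem_Ioo hs)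
  have hc2 : √(1 - τ ^ 2) ^ 2 = 1 - τ ^ 2 := sq_sqrt (one_sub_sq_pos_of_mem_Ioo hτ).le
  have hd2 : √(1 - s ^ 2) ^ 2 = 1 - s ^ 2 := sq_sqrt (one_sub_sq_pos_of_mem_Ioo hs).le
  have hu := one_sub_mul_add_sqrt_mul_sqrt_pos hτ (Ioo_subset_Icc_self hs)
  have hsqrt : HasDerivAt (fun s : ℝ => √(1 - s ^ 2)) (-s / √(1 - s ^ 2)) s := by
    convert ((hasDerivAt_pow 2 s).const_sub 1).sqrt (one_sub_sq_pos_of_mem_Ioo hs).ne' using 1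
    field_simp; ring
  have harg : HasDerivAt (fun s => 1 - τ * s + √(1 - τ ^ 2) * √(1 - s ^ 2))
      (-τ + √(1 - τ ^ 2) * (-s / √(1 - s ^ 2))) s := by
    simpa using ((hasDerivAt_id s).const_mul τ).const_sub 1 |>.fun_add (hsqrt.const_mul _)
  refine ((harg.log hu.ne').const_mul (-(√(1 - τ ^ 2))⁻¹)).congr_deriv ?_
  rw [slope_gegenbauerWeight_zero hτ hs hne]
  field_simp
  linear_combination τ * hd2 + s * hc2

theorem abs_slope_gegenbauerWeight_zero_le (hτ : τ ∈ Ioo (-1 : ℝ) 1) (hs : s ∈ Ioo (-1 : ℝ) 1)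
    (hne : s ≠ τ) :
    |slope (gegenbauerWeight 0) τ s| ≤ 2 / (1 - τ ^ 2) * gegenbauerWeight 0 s := by
  have hc : 0 < √(1 - τ ^ 2) := sqrt_pos.2 (one_sub_sq_pos_of_mem_Ioo hτ)
  have hd : 0 < √(1 - s ^ 2) := sqrt_pos.2 (one_sub_sq_pos_of_mem_Ioo hs)
  have hc2 : √(1 - τ ^ 2) ^ 2 = 1 - τ ^ 2 := sq_sqrt (one_sub_sq_pos_of_mem_Ioo hτ).le
  have hsτ : |s + τ| ≤ 2 := abs_le.2 ⟨by linarith [hs.1, hτ.1], by linarith [hs.2, hτ.2]⟩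
  rw [slope_gegenbauerWeight_zero hτ hs hne, gegenbauerWeight_zero_of_mem hs, abs_div,
    abs_of_pos (mul_pos (mul_pos hc hd) (add_pos hc hd))]
  calc |s + τ| / (√(1 - τ ^ 2) * √(1 - s ^ 2) * (√(1 - τ ^ 2) + √(1 - s ^ 2)))
      ≤ 2 / (√(1 - τ ^ 2) * √(1 - s ^ 2) * √(1 - τ ^ 2)) := by
        gcongr; linarith
    _ = 2 / √(1 - τ ^ 2) ^ 2 * (√(1 - s ^ 2))⁻¹ := by field_simp
    _ = 2 / (1 - τ ^ 2) * (√(1 - s ^ 2))⁻¹ := by rw [hc2]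

theorem intervalIntegrable_slope_gegenbauerWeight (j : ℕ) (hτ : τ ∈ Ioo (-1 : ℝ) 1) :
    IntervalIntegrable (slope (gegenbauerWeight j) τ) volume (-1) 1 := by
  induction j with
  | zero =>
    refine ((intervalIntegrable_gegenbauerWeight 0).const_mul (2 / (1 - τ ^ 2))).mono_fun'
      (by unfold slope gegenbauerWeight; fun_prop : Measurable _).aestronglyMeasurable ?_
    filter_upwards [ae_restrict_uIoc_mem_Ioo_ne (by norm_num) τ] with s ⟨hs, hne⟩
    exact abs_slope_gegenbauerWeight_zero_le hτ hs hne
  | succ j ih =>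
    have hw := (intervalIntegrable_gegenbauerWeight j).continuousOn_mul
      (g := fun s => τ + s) (by fun_prop)
    refine ((ih.const_mul (1 - τ ^ 2)).sub hw).congr_ae ?_
    filter_upwards [ae_restrict_of_ae (Measure.ae_ne volume τ)] with s hne
    exact (slope_gegenbauerWeight_succ hne).symm

theorem cauchyPV_gegenbauerWeight_zero (hτ : τ ∈ Ioo (-1 : ℝ) 1) :
    cauchyPV (-1) 1 (gegenbauerWeight 0) τ = 0 := by
  have hcont : ContinuousOn
      (fun s => -(√(1 - τ ^ 2))⁻¹ * log (1 - τ * s + √(1 - τ ^ 2) * √(1 - s ^ 2))) (Icc (-1) 1) :=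
    continuousOn_const.mul <| ContinuousOn.log (by fun_prop) fun s hs =>
      (one_sub_mul_add_sqrt_mul_sqrt_pos hτ hs).ne'
  rw [cauchyPV, integral_eq_of_hasDerivAt_off_countable_of_le _ _ (by norm_num)
    (countable_singleton τ) hcont
    (fun s hs => hasDerivAt_log_slope_gegenbauerWeight_zero hτ hs.1 hs.2)
    (intervalIntegrable_slope_gegenbauerWeight 0 hτ), gegenbauerWeight_zero_of_mem hτ,
    log_div (by linarith [hτ.1]) (by linarith [hτ.2])]
  norm_num
  rw [add_comm τ 1]
  ring

theorem cauchyPV_gegenbauerWeight_succ (j : ℕ) (hτ : τ ∈ Ioo (-1 : ℝ) 1) :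
    cauchyPV (-1) 1 (gegenbauerWeight (j + 1)) τ
      = (1 - τ ^ 2) * cauchyPV (-1) 1 (gegenbauerWeight j) τ
        + τ * ∫ s in (-1 : ℝ)..1, gegenbauerWeight j s := by
  have hw := intervalIntegrable_gegenbauerWeight j
  have hslope : ∫ s in (-1 : ℝ)..1, slope (gegenbauerWeight (j + 1)) τ s
      = (1 - τ ^ 2) * (∫ s in (-1 : ℝ)..1, slope (gegenbauerWeight j) τ s)
        - τ * ∫ s in (-1 : ℝ)..1, gegenbauerWeight j s := by
    rw [integral_congr_ae_restrict (g := fun s => (1 - τ ^ 2) * slope (gegenbauerWeight j) τ s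
        - (τ * gegenbauerWeight j s + s * gegenbauerWeight j s)) ?_,
      intervalIntegral.integral_sub, intervalIntegral.integral_add,
      intervalIntegral.integral_const_mul, intervalIntegral.integral_const_mul,
      integral_mul_gegenbauerWeight, add_zero]
    · exact hw.const_mul τ
    · exact hw.continuousOn_mul continuousOn_id
    · exact (intervalIntegrable_slope_gegenbauerWeight j hτ).const_mul _
    · exact (hw.const_mul τ).add (hw.continuousOn_mul continuousOn_id)
    · filter_upwards [ae_restrict_of_ae (Measure.ae_ne volume τ)] with s hne
      rw [slope_gegenbauerWeight_succ hne]
      ring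
  rw [cauchyPV, cauchyPV, hslope, gegenbauerWeight_succ]
  ring

end GegenbauerWeight

section GegenbauerPVPoly

open Polynomial

theorem Polynomial.iteratedDeriv_eval (k : ℕ) (p : ℝ[X]) :
    iteratedDeriv k (fun x => p.eval x) = fun x => (derivative^[k] p).eval x := by
  induction k generalizing p with
  | zero => simp
  | succ k ih =>
    rw [iteratedDeriv_succ', Function.iterate_succ_apply, ← ih]
    congr 1
    funext x
    exact Polynomial.deriv p

/-- `π` times the Hilbert transform of `gegenbauerWeight j` on `(-1, 1)`. -/
noncomputable def gegenbauerPVPoly : ℕ → ℝ[X]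
  | 0 => 0
  | j + 1 => (1 - X ^ 2) * gegenbauerPVPoly j + C (∫ s in (-1 : ℝ)..1, gegenbauerWeight j s) * X

theorem cauchyPV_gegenbauerWeight_eq_eval (j : ℕ) {τ : ℝ} (hτ : τ ∈ Ioo (-1 : ℝ) 1) :
    cauchyPV (-1) 1 (gegenbauerWeight j) τ = (gegenbauerPVPoly j).eval τ := by
  induction j with
  | zero => simp [cauchyPV_gegenbauerWeight_zero hτ, gegenbauerPVPoly]
  | succ j ih =>
    rw [cauchyPV_gegenbauerWeight_succ j hτ, ih, gegenbauerPVPoly]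
    simp only [eval_add, eval_mul, eval_sub, eval_one, eval_pow, eval_X, eval_C]
    ring

theorem natDegree_gegenbauerPVPoly_succ_le (j : ℕ) :
    (gegenbauerPVPoly (j + 1)).natDegree ≤ 2 * j + 1 := by
  have hCX (c : ℝ) : (C c * X).natDegree ≤ 1 := (natDegree_C_mul_le _ _).trans natDegree_X_le
  induction j with
  | zero => simpa [gegenbauerPVPoly] using hCX _
  | succ j ih =>
    rw [gegenbauerPVPoly]
    have h₂ : (1 - X ^ 2 : ℝ[X]).natDegree ≤ 2 := (natDegree_sub_le _ _).trans (by simp)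
    exact natDegree_add_le_of_degree_le ((natDegree_mul_le_of_le h₂ ih).trans (by omega))
      ((hCX _).trans (by omega))

theorem coeff_gegenbauerPVPoly_succ (j : ℕ) :
    (gegenbauerPVPoly (j + 1)).coeff (2 * j + 1) = (-1) ^ j * π := by
  induction j with
  | zero => simp [gegenbauerPVPoly, integral_gegenbauerWeight_zero]
  | succ j ih =>
    have htop : (gegenbauerPVPoly (j + 1)).coeff (2 * j + 3) = 0 :=
      coeff_eq_zero_of_natDegree_lt ((natDegree_gegenbauerPVPoly_succ_le j).trans_lt (by omega))
    rw [gegenbauerPVPoly, show 2 * (j + 1) + 1 = 2 * j + 1 + 2 by ring, coeff_add, sub_mul,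
      one_mul, coeff_sub, coeff_X_pow_mul, ih, coeff_C_mul_X, if_neg (by omega), htop]
    ring

theorem iterate_derivative_gegenbauerPVPoly_succ (j : ℕ) :
    derivative^[2 * j + 1] (gegenbauerPVPoly (j + 1))
      = C ((-1) ^ j * π * (2 * j + 1).factorial) := by
  rw [eq_C_of_natDegree_le_zero ((natDegree_iterate_derivative _ _).trans
      (by have := natDegree_gegenbauerPVPoly_succ_le j; omega)),
    coeff_iterate_derivative, zero_add, coeff_gegenbauerPVPoly_succ, Nat.descFactorial_self,
    nsmul_eq_mul, mul_comm]

end GegenbauerPVPoly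

theorem iteratedDeriv_hilbert_gegenbauerWeight (m : ℕ) {t : ℝ} (ht : |t| < 1) :
    iteratedDeriv (2 * m + 1) (hilbert (gegenbauerWeight (m + 1))) t
      = (-1) ^ m * (2 * m + 1).factorial := by
  have htI : t ∈ Ioo (-1 : ℝ) 1 := ⟨neg_lt_of_abs_lt ht, lt_of_abs_lt ht⟩
  have hpoly : hilbert (gegenbauerWeight (m + 1))
      =ᶠ[𝓝 t] fun τ => (Polynomial.C π⁻¹ * gegenbauerPVPoly (m + 1)).eval τ := by
    filter_upwards [isOpen_Ioo.mem_nhds htI] with τ hτ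
    rw [hilbert_eq_cauchyPV (fun s hs => gegenbauerWeight_of_notMem hs) hτ
      (intervalIntegrable_slope_gegenbauerWeight _ hτ), cauchyPV_gegenbauerWeight_eq_eval _ hτ,
      Polynomial.eval_mul, Polynomial.eval_C, div_eq_inv_mul]
  rw [hpoly.iteratedDeriv_eq, Polynomial.iteratedDeriv_eval,
    Polynomial.iterate_derivative_C_mul, iterate_derivative_gegenbauerPVPoly_succ,
    ← Polynomial.C_mul]
  exact Polynomial.eval_C.trans (by field_simp)

theorem stmt_13_general (n : ℕ) (hn : 4 ≤ n) (heven : Even n) (a : Fin n → ℝ)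
    (x y : EuclideanSpace ℝ (Fin n)) (t : ℝ) (ht : |t| < 1) :
    (sphereVol (n - 2) / sphereVol (n - 1)) *
        ((2 * ‖diagMul a x - diagMul a y‖) ^ ((n : ℕ) - 2))⁻¹ * Real.pi *
        iteratedDeriv (n - 3)
          (hilbert fun s : ℝ => (max 0 (1 - s ^ 2)) ^ (((n : ℝ) - 3) / 2)) t =
      (-1 : ℝ) ^ ((n - 2) / 2) *
        (Real.pi * sphereVol (n - 2) * (Nat.factorial (n - 2)) / 2 ^ (n - 2)) *
        fundSol n (diagMul a x) (diagMul a y) := by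
  obtain ⟨m, rfl⟩ : ∃ m, n = 2 * m + 4 := ⟨n / 2 - 2, by obtain ⟨k, rfl⟩ := heven; omega⟩
  have hweight : (fun s : ℝ => max 0 (1 - s ^ 2) ^ ((((2 * m + 4 : ℕ) : ℝ) - 3) / 2))
      = gegenbauerWeight (m + 1) := by
    funext s; rw [gegenbauerWeight]; push_cast; ring_nf
  have hdim : ((2 : ℝ) - (2 * m + 4 : ℕ)) = -(2 * m + 2 : ℕ) := by push_cast; ring
  -- `(n - 2)! / (2 - n) = -(n - 3)!`
  have hcancel : ((2 * m + 2 : ℕ) : ℝ) * (-(2 * m + 2 : ℕ) : ℝ)⁻¹ = -1 := by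
    rw [inv_neg, mul_neg, mul_inv_cancel₀ (by positivity)]
  rw [hweight, show 2 * m + 4 - 3 = 2 * m + 1 by omega,
    iteratedDeriv_hilbert_gegenbauerWeight m ht, fundSol, show 2 * m + 4 - 2 = 2 * m + 2 by omega,
    show (2 * m + 2) / 2 = m + 1 by omega,
    show ((2 : ℤ) - (2 * m + 4 : ℕ)) = -((2 * m + 2 : ℕ) : ℤ) by push_cast; ring, zpow_neg,
    zpow_natCast, hdim, show (2 * m + 2).factorial = (2 * m + 2) * (2 * m + 1).factorial from
      Nat.factorial_succ _, Nat.cast_mul, mul_pow, mul_inv, div_eq_mul_inv _ (_ * _), mul_inv]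
  set D := ‖diagMul a x - diagMul a y‖
  linear_combination (-1) ^ m * π * sphereVol (2 * m + 2) * ((2 * m + 1).factorial : ℝ)
    * (2 ^ (2 * m + 2))⁻¹ * (D ^ (2 * m + 2))⁻¹ * (sphereVol (2 * m + 4 - 1))⁻¹ * hcancel

/-- the kernel identity in even dimensions `n ≥ 4`, with the
integral against `Φ^{(n-2)}` (`Φ = log|·|`) interpreted, as in the paper, as
`(2|Ax-Ay|)^{-(n-2)} π ∂_t^{n-3} H[(1-s²)_+^{(n-3)/2}](t)`. -/
theorem stmt_13 (n : ℕ) (hn : 4 ≤ n) (heven : Even n) (a : Fin n → ℝ)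
    (ha : ∀ i, 0 < a i) (x y : EuclideanSpace ℝ (Fin n))
    (hxy : diagMul a x ≠ diagMul a y) (t : ℝ) (ht : |t| < 1) :
    (sphereVol (n - 2) / sphereVol (n - 1)) *
        ((2 * ‖diagMul a x - diagMul a y‖) ^ ((n : ℕ) - 2))⁻¹ * Real.pi *
        iteratedDeriv (n - 3)
          (hilbert fun s : ℝ => (max 0 (1 - s ^ 2)) ^ (((n : ℝ) - 3) / 2)) t =
      (-1 : ℝ) ^ ((n - 2) / 2) *
        (Real.pi * sphereVol (n - 2) * (Nat.factorial (n - 2)) / 2 ^ (n - 2)) *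
        fundSol n (diagMul a x) (diagMul a y) :=
  stmt_13_general n hn heven a x y t ht
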